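/- For every x ∈ [0,1], the law of the random variable U·x + U·(1−U), where U is uniform on [0,1], is absolutely continuous with respect to Lebesgue measure on [0,1] with density φ_x given by φ_x(t) = ((1+x)² − 4t)^{−1/2} · (1_{[0,x)}(t) + 2·1_{[x,b_x)}(t)) for t ∈ [0,1]. -/

import Mathlib

open MeasureTheory Set

/-!
With `c = (1+x)/2` the map is `f u = c² - (u - c)²`, increasing from `[0, c]` onto `[0, c²]` and
decreasing from `[c, 1]` onto `[x, c²]`. The inverse branches `t ↦ c ∓ √(c² - t)` both have
derivative of absolute value `(4(c² - t))^{-1/2}`, and `φ_x` is the sum of these two branch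
densities on their ranges. The two measures are compared on the half-lines `(-∞, a]`: with
`s = √(c² - a)`, the preimage is `[0, c - s] ∪ [c + s, 1]`, and integrating each branch density
gives the same mass `(c - s)⁺ + (1 - c - s)⁺`; for `a ≥ c²` this still holds because `√`
vanishes on negative numbers, so `s = 0`.
-/

/-- The density `φ_x(t) = ((1+x)² − 4t)^{−1/2} · (1_{[0,x)}(t) + 2·1_{[x,b_x)}(t))`
with `b_x = ((1+x)/2)²`. -/
noncomputable def phi (x t : ℝ) : ℝ :=
  ((1 + x) ^ 2 - 4 * t) ^ (-(1:ℝ) / 2) *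
    (Set.indicator (Set.Ico (0:ℝ) x) 1 t
      + 2 * Set.indicator (Set.Ico x (((1 + x) / 2) ^ 2)) 1 t)

noncomputable def branchDensity (b t : ℝ) : ℝ := (4 * (b - t)) ^ (-(1:ℝ) / 2)

lemma branchDensity_nonneg {b t : ℝ} (ht : t ≤ b) : 0 ≤ branchDensity b t :=
  Real.rpow_nonneg (by linarith) _

lemma hasDerivAt_neg_sqrt_sub {b t : ℝ} (ht : t < b) :
    HasDerivAt (fun s => -√(b - s)) (branchDensity b t) t := by
  have hbt : 0 < b - t := sub_pos.mpr ht
  refine (((hasDerivAt_id t).const_sub b).sqrt hbt.ne').neg.congr_deriv ?_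
  rw [branchDensity, neg_div, neg_neg, id, neg_div, Real.rpow_neg (by positivity),
    ← Real.sqrt_eq_rpow, Real.sqrt_mul zero_le_four, show √(4:ℝ) = 2 by
      rw [show (4:ℝ) = 2 ^ 2 by norm_num, Real.sqrt_sq zero_le_two], one_div]

lemma lintegral_Icc_branchDensity {p q b : ℝ} (hqb : q ≤ b) :
    ∫⁻ t in Icc p q, ENNReal.ofReal (branchDensity b t)
      = ENNReal.ofReal (√(b - p) - √(b - q)) := by
  rcases lt_or_ge q p with hqp | hpq
  · rw [Icc_eq_empty_of_lt hqp, Measure.restrict_empty, lintegral_zero_measure, eq_comm,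
      ENNReal.ofReal_eq_zero, sub_nonpos]
    exact Real.sqrt_le_sqrt (by linarith)
  have hcont : ContinuousOn (fun s => -√(b - s)) (Icc p q) := by fun_prop
  have hderiv : ∀ t ∈ Ioo p q, HasDerivAt (fun s => -√(b - s)) (branchDensity b t) t :=
    fun t ht => hasDerivAt_neg_sqrt_sub (ht.2.trans_le hqb)
  -- the derivative blows up at `t = b`; its integrability comes from its sign
  have hint := intervalIntegral.integrableOn_deriv_of_nonneg hcont hderiv fun t ht =>
    branchDensity_nonneg (ht.2.le.trans hqb)
  rw [setLIntegral_congr Ioc_ae_eq_Icc.symm, ← ofReal_integral_eq_lintegral_ofReal hint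
      (ae_restrict_of_forall_mem measurableSet_Ioc fun t ht =>
        branchDensity_nonneg (ht.2.trans hqb)),
    ← intervalIntegral.integral_of_le hpq, intervalIntegral.integral_eq_sub_of_hasDerivAt_of_le
      hpq hcont hderiv ((intervalIntegrable_iff_integrableOn_Ioc_of_le hpq).mpr hint),
    neg_sub_neg]

lemma lintegral_Iic_inter_Ico_branchDensity (a p b : ℝ) :
    ∫⁻ t in Iic a ∩ Ico p b, ENNReal.ofReal (branchDensity b t)
      = ENNReal.ofReal (√(b - p) - √(b - a)) := by
  rcases lt_or_ge a b with hab | hba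
  · have hset : Iic a ∩ Ico p b = Icc p a := by
      ext t
      simp only [mem_inter_iff, mem_Iic, mem_Ico, mem_Icc]
      constructor
      · rintro ⟨hta, hpt, -⟩
        exact ⟨hpt, hta⟩
      · rintro ⟨hpt, hta⟩
        exact ⟨hta, hpt, hta.trans_lt hab⟩
    rw [hset, lintegral_Icc_branchDensity hab.le]
  · rw [inter_eq_right.mpr fun t ht => ht.2.le.trans hba, setLIntegral_congr Ico_ae_eq_Icc,
      lintegral_Icc_branchDensity le_rfl, sub_self, Real.sqrt_zero,
      Real.sqrt_eq_zero'.mpr (sub_nonpos.mpr hba)]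

lemma phi_eq_indicator_add_indicator {x : ℝ} (hx : 0 ≤ x) (t : ℝ) :
    phi x t = (Ico 0 (((1 + x) / 2) ^ 2)).indicator (branchDensity (((1 + x) / 2) ^ 2)) t
      + (Ico x (((1 + x) / 2) ^ 2)).indicator (branchDensity (((1 + x) / 2) ^ 2)) t := by
  have hxb : x ≤ ((1 + x) / 2) ^ 2 := by nlinarith [sq_nonneg (1 - x)]
  have hk : (1 + x) ^ 2 - 4 * t = 4 * (((1 + x) / 2) ^ 2 - t) := by ring
  simp only [phi, branchDensity, hk, indicator_apply, mem_Ico, Pi.one_apply]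
  split_ifs <;> grind

lemma setLIntegral_Iic_inter_Icc_phi {x : ℝ} (hx : x ∈ Icc (0:ℝ) 1) (a : ℝ) :
    ∫⁻ t in Iic a ∩ Icc 0 1, ENNReal.ofReal (phi x t)
      = ENNReal.ofReal ((1 + x) / 2 - √(((1 + x) / 2) ^ 2 - a))
        + ENNReal.ofReal (1 - (1 + x) / 2 - √(((1 + x) / 2) ^ 2 - a)) := by
  obtain ⟨hx0, hx1⟩ := hx
  set b := ((1 + x) / 2) ^ 2
  have hb1 : b ≤ 1 := pow_le_one₀ (by linarith) (by linarith)
  have hbranch : ∀ p, 0 ≤ p → ∫⁻ t in Iic a ∩ Icc 0 1,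
      (Ico p b).indicator (fun t => ENNReal.ofReal (branchDensity b t)) t
        = ENNReal.ofReal (√(b - p) - √(b - a)) := fun p hp => by
    rw [lintegral_indicator measurableSet_Ico, Measure.restrict_restrict measurableSet_Ico,
      inter_left_comm, inter_eq_left.mpr (Ico_subset_Icc_self.trans (Icc_subset_Icc hp hb1)),
      lintegral_Iic_inter_Ico_branchDensity]
  have hofReal : ∀ t, ENNReal.ofReal (phi x t)
      = (Ico 0 b).indicator (fun t => ENNReal.ofReal (branchDensity b t)) t
        + (Ico x b).indicator (fun t => ENNReal.ofReal (branchDensity b t)) t := fun t => by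
    rw [phi_eq_indicator_add_indicator hx0, ENNReal.ofReal_add
      (indicator_nonneg (fun t ht => branchDensity_nonneg ht.2.le) t)
      (indicator_nonneg (fun t ht => branchDensity_nonneg ht.2.le) t)]
    congr 1 <;> exact (congrFun (indicator_comp_of_zero ENNReal.ofReal_zero) t).symm
  have hmeas : Measurable fun t => ENNReal.ofReal (branchDensity b t) := by
    unfold branchDensity; fun_prop
  simp_rw [hofReal]
  rw [lintegral_add_left (hmeas.indicator measurableSet_Ico), hbranch 0 le_rfl, hbranch x hx0,
    sub_zero, Real.sqrt_sq (by linarith), show b - x = (1 - (1 + x) / 2) ^ 2 by ring,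
    Real.sqrt_sq (by linarith)]

lemma preimage_sq_sub_sq_sub_Iic (c a : ℝ) :
    (fun u : ℝ => c ^ 2 - (u - c) ^ 2) ⁻¹' Iic a
      = Iic (c - √(c ^ 2 - a)) ∪ Ici (c + √(c ^ 2 - a)) := by
  ext u
  have hsq : c ^ 2 - (u - c) ^ 2 ≤ a ↔ c ^ 2 - a ≤ |u - c| ^ 2 := by
    rw [sq_abs]; constructor <;> intro h <;> linarith
  simp only [mem_preimage, mem_Iic, mem_union, mem_Ici, hsq, ← Real.sqrt_le_left (abs_nonneg _),
    le_abs']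
  constructor <;> rintro (h | h) <;> [left; right; left; right] <;> linarith

lemma volume_Icc_inter_Iic_union_Ici {c s : ℝ} (hc0 : 0 ≤ c) (hc1 : c ≤ 1) (hs : 0 ≤ s) :
    volume (Icc 0 1 ∩ (Iic (c - s) ∪ Ici (c + s)))
      = ENNReal.ofReal (c - s) + ENNReal.ofReal (1 - c - s) := by
  have hset : Icc 0 1 ∩ (Iic (c - s) ∪ Ici (c + s)) = Icc 0 (c - s) ∪ Icc (c + s) 1 := by
    ext u
    simp only [mem_inter_iff, mem_union, mem_Icc, mem_Iic, mem_Ici]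
    constructor
    · rintro ⟨⟨h0, h1⟩, h | h⟩
      exacts [Or.inl ⟨h0, h⟩, Or.inr ⟨h, h1⟩]
    · rintro (⟨h0, h⟩ | ⟨h, h1⟩)
      exacts [⟨⟨h0, by linarith⟩, Or.inl h⟩, ⟨⟨by linarith, h1⟩, Or.inr h⟩]
  have hdisj : AEDisjoint volume (Icc 0 (c - s)) (Icc (c + s) 1) :=
    measure_mono_null (fun u hu => mem_singleton_iff.mpr (by linarith [hu.1.2, hu.2.1]))
      (measure_singleton c)
  rw [hset, measure_union₀ measurableSet_Icc.nullMeasurableSet hdisj, Real.volume_Icc,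
    Real.volume_Icc, sub_zero, sub_add_eq_sub_sub]

/-- For every `x ∈ [0,1]`, the law of `U·x + U·(1−U)` (with `U` uniform on `[0,1]`)
is absolutely continuous with respect to Lebesgue measure on `[0,1]` with density `φ_x`. -/
theorem law_of_update_has_density (x : ℝ) (hx : x ∈ Set.Icc (0:ℝ) 1) :
    Measure.map (fun u : ℝ => u * x + u * (1 - u)) (volume.restrict (Set.Icc (0:ℝ) 1))
      = (volume.restrict (Set.Icc (0:ℝ) 1)).withDensity
          (fun t => ENNReal.ofReal (phi x t)) := by
  have hf : (fun u : ℝ => u * x + u * (1 - u))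
      = fun u => ((1 + x) / 2) ^ 2 - (u - (1 + x) / 2) ^ 2 := by
    funext u; ring
  refine Measure.ext_of_Iic _ _ fun a => ?_
  rw [hf, Measure.map_apply (by fun_prop) measurableSet_Iic,
    Measure.restrict_apply' measurableSet_Icc, preimage_sq_sub_sq_sub_Iic, inter_comm,
    volume_Icc_inter_Iic_union_Ici (by linarith [hx.1]) (by linarith [hx.2]) (Real.sqrt_nonneg _),
    withDensity_apply _ measurableSet_Iic, Measure.restrict_restrict measurableSet_Iic,
    setLIntegral_Iic_inter_Icc_phi hx]
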